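/- Let d be a positive integer and let w_0, w_1, …, w_d be nonnegative reals with Σ_{i=0}^{d} w_i = 1 and 0 < w_0 < 1. Define s(x) = Σ_{i=0}^{d} w_i x^i. Then the function g(x) = ((1 + s(x))/(1 - x)) · log((1 + s(x))/2) is strictly decreasing on the interval (0,1). -/

import Mathlib

/-!
On `(0, 1)` we have `0 ≤ s < 1`, `s' ≥ 0`, and, termwise from `n xⁿ⁻¹ (1 - x) ≤ 1 - xⁿ`,
the bound `s' (1 - x) ≤ 1 - s`. The derivative of `g` is
`((b + 1 + s) L + b) / (1 - x)²` with `b = s' (1 - x)` and `L = log ((1 + s) / 2)`. Since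
`L < (s - 1) / 2` (from `log t < t - 1`), the numerator is below `(1 + s) (b + s - 1) / 2 ≤ 0`.
-/

open Real Set Finset

lemma natCast_mul_pow_pred_mul_one_sub_le (n : ℕ) {x : ℝ} (hx₀ : 0 ≤ x) (hx₁ : x ≤ 1) :
    n * x ^ (n - 1) * (1 - x) ≤ 1 - x ^ n := by
  have hgeom : 1 - x ^ n = (∑ j ∈ range n, x ^ j) * (1 - x) := by
    linear_combination geom_sum_mul x n
  rw [hgeom]
  refine mul_le_mul_of_nonneg_right ?_ (by linarith)
  calc (n : ℝ) * x ^ (n - 1) = ∑ _j ∈ range n, x ^ (n - 1) := by simp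
    _ ≤ ∑ j ∈ range n, x ^ j :=
      sum_le_sum fun j hj => pow_le_pow_of_le_one hx₀ hx₁ (by grind)

lemma add_one_mul_log_add_lt_zero {a b : ℝ} (ha₀ : -1 < a) (ha₁ : a < 1) (hb : 0 ≤ b)
    (hab : b ≤ 1 - a) : (b + 1 + a) * log ((1 + a) / 2) + b < 0 := by
  have hlog : log ((1 + a) / 2) < (a - 1) / 2 := by
    have := log_lt_sub_one_of_pos (x := (1 + a) / 2) (by linarith) (by intro h; linarith)
    linarith
  have hlt := mul_lt_mul_of_pos_left hlog (by linarith : 0 < b + 1 + a)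
  nlinarith [mul_le_mul_of_nonneg_right hab (by linarith : 0 ≤ 1 + a)]

theorem strictAntiOn_div_one_sub_mul_log {s s' : ℝ → ℝ}
    (hs : ∀ x ∈ Ioo (0 : ℝ) 1, HasDerivAt s (s' x) x)
    (hs' : ∀ x ∈ Ioo (0 : ℝ) 1, 0 ≤ s' x)
    (hs₀ : ∀ x ∈ Ioo (0 : ℝ) 1, -1 < s x) (hs₁ : ∀ x ∈ Ioo (0 : ℝ) 1, s x < 1)
    (hs's : ∀ x ∈ Ioo (0 : ℝ) 1, s' x * (1 - x) ≤ 1 - s x) :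
    StrictAntiOn (fun x => (1 + s x) / (1 - x) * log ((1 + s x) / 2)) (Ioo 0 1) := by
  have hderiv : ∀ x ∈ Ioo (0 : ℝ) 1, HasDerivAt
      (fun x => (1 + s x) / (1 - x) * log ((1 + s x) / 2))
      (((s' x * (1 - x) + 1 + s x) * log ((1 + s x) / 2) + s' x * (1 - x)) / (1 - x) ^ 2) x := by
    intro x hx
    have h1x : 1 - x ≠ 0 := by linarith [hx.2]
    have h1s : 1 + s x ≠ 0 := by linarith [hs₀ x hx]
    have hnum := (hs x hx).const_add 1
    have hquot := hnum.fun_div ((hasDerivAt_id' x).const_sub 1) h1x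
    refine (hquot.fun_mul ((hnum.div_const 2).log (by simpa using h1s))).congr_deriv ?_
    field_simp
    ring
  refine strictAntiOn_of_deriv_neg (convex_Ioo 0 1)
    (fun x hx => (hderiv x hx).continuousAt.continuousWithinAt) fun x hx => ?_
  rw [interior_Ioo] at hx
  rw [(hderiv x hx).deriv]
  have h1x : 0 < 1 - x := by linarith [hx.2]
  refine div_neg_of_neg_of_pos ?_ (by positivity)
  exact add_one_mul_log_add_lt_zero (hs₀ x hx) (hs₁ x hx) (mul_nonneg (hs' x hx) h1x.le)
    (hs's x hx)

section WeightedPowerSum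

variable {ι : Type*} [Fintype ι] (n : ι → ℕ) {w : ι → ℝ}

lemma hasDerivAt_sum_mul_pow (x : ℝ) :
    HasDerivAt (fun x => ∑ i, w i * x ^ n i) (∑ i, w i * (n i * x ^ (n i - 1))) x :=
  HasDerivAt.fun_sum fun i _ => (hasDerivAt_pow (n i) x).const_mul (w i)

variable (hw : ∀ i, 0 ≤ w i) {x : ℝ}
include hw

lemma sum_mul_pow_nonneg (hx : 0 ≤ x) : 0 ≤ ∑ i, w i * x ^ n i :=
  sum_nonneg fun i _ => mul_nonneg (hw i) (pow_nonneg hx _)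

lemma sum_mul_natCast_mul_pow_nonneg (hx : 0 ≤ x) : 0 ≤ ∑ i, w i * (n i * x ^ (n i - 1)) :=
  sum_nonneg fun i _ => mul_nonneg (hw i) (by positivity)

lemma sum_mul_pow_lt_one (hsum : ∑ i, w i = 1) {j : ι} (hj : 0 < w j) (hnj : n j ≠ 0)
    (hx₀ : 0 ≤ x) (hx₁ : x < 1) : ∑ i, w i * x ^ n i < 1 := by
  rw [← hsum]
  refine sum_lt_sum (fun i _ => ?_) ⟨j, mem_univ j, ?_⟩
  · exact mul_le_of_le_one_right (hw i) (pow_le_one₀ hx₀ hx₁.le)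
  · exact mul_lt_of_lt_one_right hj (pow_lt_one₀ hx₀ hx₁ hnj)

lemma sum_mul_natCast_mul_pow_mul_one_sub_le (hsum : ∑ i, w i = 1) (hx₀ : 0 ≤ x) (hx₁ : x ≤ 1) :
    (∑ i, w i * (n i * x ^ (n i - 1))) * (1 - x) ≤ 1 - ∑ i, w i * x ^ n i := by
  calc (∑ i, w i * (n i * x ^ (n i - 1))) * (1 - x)
      = ∑ i, w i * (n i * x ^ (n i - 1) * (1 - x)) := by simp only [sum_mul, mul_assoc]
    _ ≤ ∑ i, w i * (1 - x ^ n i) := sum_le_sum fun i _ =>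
      mul_le_mul_of_nonneg_left (natCast_mul_pow_pred_mul_one_sub_le _ hx₀ hx₁) (hw i)
    _ = 1 - ∑ i, w i * x ^ n i := by simp only [mul_sub, mul_one, sum_sub_distrib, hsum]

end WeightedPowerSum

theorem g_strict_anti_general (d : ℕ)
    (w : Fin (d + 1) → ℝ) (hw : ∀ i, 0 ≤ w i) (hsum : ∑ i, w i = 1)
    (hw0lt : w 0 < 1) :
    StrictAntiOn (fun x : ℝ =>
        ((1 + ∑ i, w i * x ^ (i : ℕ)) / (1 - x)) *
          Real.log ((1 + ∑ i, w i * x ^ (i : ℕ)) / 2))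
      (Set.Ioo 0 1) := by
  obtain ⟨j, -, hj⟩ : ∃ j ∈ Finset.univ, 0 < w (Fin.succ j) := by
    refine exists_lt_of_sum_lt (f := fun _ => 0) ?_
    rw [Fin.sum_univ_succ] at hsum
    simp only [sum_const_zero]
    linarith
  refine strictAntiOn_div_one_sub_mul_log (fun x _ => hasDerivAt_sum_mul_pow Fin.val x)
    (fun x hx => sum_mul_natCast_mul_pow_nonneg Fin.val hw hx.1.le)
    (fun x hx => by linarith [sum_mul_pow_nonneg Fin.val hw hx.1.le])
    (fun x hx => sum_mul_pow_lt_one Fin.val hw hsum hj (Nat.succ_ne_zero _) hx.1.le hx.2)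
    (fun x hx => sum_mul_natCast_mul_pow_mul_one_sub_le Fin.val hw hsum hx.1.le hx.2.le)

/-- for nonnegative weights summing to 1 with `0 < w_0 < 1`, letting
`s(x) = ∑_{i=0}^d w_i x^i`, the function `g(x) = ((1 + s(x))/(1 - x)) log((1 + s(x))/2)`
is strictly decreasing on `(0, 1)`. -/
theorem g_strict_anti (d : ℕ) (hd : 0 < d)
    (w : Fin (d + 1) → ℝ) (hw : ∀ i, 0 ≤ w i) (hsum : ∑ i, w i = 1)
    (hw0pos : 0 < w 0) (hw0lt : w 0 < 1) :
    StrictAntiOn (fun x : ℝ =>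
        ((1 + ∑ i, w i * x ^ (i : ℕ)) / (1 - x)) *
          Real.log ((1 + ∑ i, w i * x ^ (i : ℕ)) / 2))
      (Set.Ioo 0 1) :=
  g_strict_anti_general d w hw hsum hw0lt
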